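/- Let X be a periodic commutative semigroup with a unique idempotent e. If the maximal subgroup H_e of X is bounded and for every infinite subset A ⊆ X the set AA = {xy : x,y ∈ A} is not a singleton, then X is T1S-closed. -/

import Mathlib

/-- `spow x n` denotes the power `x^(n+1)` in a semigroup (so exponents `n ≥ 1` are
the values `spow x (n-1)`). -/
def spow {S : Type*} [Semigroup S] (x : S) : ℕ → S
  | 0 => x
  | n + 1 => spow x n * x

/-- The `H`-class of `a` in a semigroup `S`:
`H_a = {x ∈ S | xS¹ = aS¹ ∧ S¹x = S¹a}`, computed in `S¹ = WithOne S`. -/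
def HClass {S : Type*} [Semigroup S] (a : S) : Set S :=
  {x | {y : WithOne S | ∃ s : WithOne S, y = (x : WithOne S) * s} =
         {y : WithOne S | ∃ s : WithOne S, y = (a : WithOne S) * s} ∧
       {y : WithOne S | ∃ s : WithOne S, y = s * (x : WithOne S)} =
         {y : WithOne S | ∃ s : WithOne S, y = s * (a : WithOne S)}}

/-- The center `Z(S)` of a semigroup. -/
def centerSet (S : Type*) [Semigroup S] : Set S := {z : S | ∀ x : S, z * x = x * z}

/-- The Clifford part `H(S)`: the union of all `H`-classes of idempotents
(equivalently, of all maximal subgroups). -/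
def CliffordPart (S : Type*) [Semigroup S] : Set S :=
  {x : S | ∃ e : S, IsIdempotentElem e ∧ x ∈ HClass e}

/-- A semigroup is chain-finite if it contains no infinite chain, where a chain
is a set `C` with `x * y ∈ {x, y}` for all `x, y ∈ C`. -/
def ChainFinite (S : Type*) [Semigroup S] : Prop :=
  ∀ C : Set S, (∀ x ∈ C, ∀ y ∈ C, x * y = x ∨ x * y = y) → C.Finite

/-- A semigroup is periodic if every element has an idempotent power `x^n`, `n ≥ 1`. -/
def IsPeriodicSemigroup (S : Type*) [Semigroup S] : Prop :=
  ∀ x : S, ∃ n : ℕ, IsIdempotentElem (spow x n)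

/-- The maximal subgroup `H_e` of an idempotent `e` is bounded: some power `n ≥ 1`
of every element equals `e`. -/
def BoundedHClass {S : Type*} [Semigroup S] (e : S) : Prop :=
  ∃ n : ℕ, ∀ x ∈ HClass e, spow x n = e

/-- A semigroup `X` is `T₁S`-closed if for every topological semigroup `Y`
satisfying the `T₁` separation axiom and every injective homomorphism `h : X → Y`
with discrete image, the image of `h` is closed in `Y`. -/
def IsT1SClosed (X : Type*) [Semigroup X] : Prop :=
  ∀ (Y : Type*) [Semigroup Y] [TopologicalSpace Y] [ContinuousMul Y] [T1Space Y],
    ∀ h : X →ₙ* Y, Function.Injective h → DiscreteTopology (Set.range h) →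
      IsClosed (Set.range h)

/-- A semigroup `X` is `TzS`-closed if for every Hausdorff zero-dimensional
topological semigroup `Y` (i.e. the clopen sets form a base of the topology) and
every injective homomorphism `h : X → Y` with discrete image, the image of `h`
is closed in `Y`. -/
def IsTzSClosed (X : Type*) [Semigroup X] : Prop :=
  ∀ (Y : Type*) [Semigroup Y] [TopologicalSpace Y] [ContinuousMul Y] [T2Space Y],
    TopologicalSpace.IsTopologicalBasis {s : Set Y | IsClopen s} →
    ∀ h : X →ₙ* Y, Function.Injective h → DiscreteTopology (Set.range h) →
      IsClosed (Set.range h)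

/-!
Let `y ∉ h[X]` be a limit point of the discrete image `h[X]`. No power of `y` lies in `h[X]`:
if `y ^ (j + 2) = h d`, then `u * v ^ (j + 1) = d` for all `u, v ∈ X` with `h u, h v` close to
`y`, so the products of the powers `u ^ (j + 1)` are constant, and the hypothesis on `AA` forces
`y ^ (j + 1) ∈ h[X]`. Since `H_e` is bounded, `w = y ^ (n + 1)` satisfies `w * h e = h e`, and
multiplication by `w` preserves `h[X]`, inducing a left translation `φ` of `X` with `φ e = e`.
The translation `φ` has no cycles on the nil part `{x | x * e = e}` except `e`, so every element
of the nil part reaches `e` after finitely many steps. Elements `u` with `h u` close to `w` need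
arbitrarily many steps, and their positions halfway to `e` form an infinite set `A` with
`AA = {e}`.
-/

open Filter Topology Set Function

section Powers

variable {S : Type*}

theorem spow_succ' [Semigroup S] (x : S) (n : ℕ) : spow x (n + 1) = x * spow x n := by
  induction n with
  | zero => rfl
  | succ n ih => rw [spow, ih, mul_assoc, ← spow, ih]

theorem spow_add [Semigroup S] (x : S) (a b : ℕ) :
    spow x (a + b + 1) = spow x a * spow x b := by
  induction b with
  | zero => rfl
  | succ b ih => rw [← add_assoc, spow, ih, spow, mul_assoc]

theorem spow_mul_eq_of_mul_eq [Semigroup S] {x y : S} (h : x * y = y) (n : ℕ) :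
    spow x n * y = y := by
  induction n with
  | zero => exact h
  | succ n ih => rw [spow, mul_assoc, h, ih]

theorem IsIdempotentElem.spow_eq [Semigroup S] {e : S} (he : IsIdempotentElem e) (n : ℕ) :
    spow e n = e := by
  induction n with
  | zero => rfl
  | succ n ih => rw [spow, ih, he]

theorem spow_spow [Semigroup S] (x : S) (a b : ℕ) :
    spow (spow x a) b = spow x (a * b + a + b) := by
  induction b with
  | zero => simp only [Nat.mul_zero, Nat.zero_add, Nat.add_zero]; rfl
  | succ b ih => rw [spow, ih, show a * (b + 1) + a + (b + 1) = a * b + a + b + a + 1 by ring,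
      spow_add]

theorem mul_spow [CommSemigroup S] (x y : S) (n : ℕ) :
    spow (x * y) n = spow x n * spow y n := by
  induction n with
  | zero => rfl
  | succ n ih => rw [spow, ih, spow, spow, mul_mul_mul_comm]

theorem WithOne.coe_spow [Semigroup S] (x : S) (n : ℕ) :
    ((spow x n : S) : WithOne S) = (x : WithOne S) ^ (n + 1) := by
  induction n with
  | zero => simp [spow]
  | succ n ih => rw [spow, WithOne.coe_mul, ih, pow_succ _ (n + 1)]

theorem map_spow {T : Type*} [Semigroup S] [Semigroup T] (h : S →ₙ* T) (x : S) (n : ℕ) :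
    h (spow x n) = spow (h x) n := by
  induction n with
  | zero => rfl
  | succ n ih => rw [spow, map_mul, ih, spow]

theorem continuous_spow [Semigroup S] [TopologicalSpace S] [ContinuousMul S] (n : ℕ) :
    Continuous fun x : S => spow x n := by
  induction n with
  | zero => exact continuous_id
  | succ n ih => exact ih.mul continuous_id

end Powers

theorem mem_HClass_of_dvd_of_dvd {S : Type*} [CommSemigroup S] {a b : S}
    (hba : (b : WithOne S) ∣ a) (hab : (a : WithOne S) ∣ b) : a ∈ HClass b := by
  have hiff : ∀ y : WithOne S, (a : WithOne S) ∣ y ↔ (b : WithOne S) ∣ y := fun y =>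
    ⟨hba.trans, hab.trans⟩
  refine ⟨Set.ext hiff, Set.ext fun y => ?_⟩
  simp_rw [Set.mem_ofPred_eq, mul_comm _ (a : WithOne S), mul_comm _ (b : WithOne S)]
  exact hiff y

theorem mul_mem_HClass {S : Type*} [CommSemigroup S] {e : S} (x : S) {m : ℕ}
    (hm : spow (x * e) m = e) : x * e ∈ HClass e := by
  refine mem_HClass_of_dvd_of_dvd ⟨x, by rw [WithOne.coe_mul, mul_comm]⟩ ?_
  have := dvd_pow_self ((x * e : S) : WithOne S) m.succ_ne_zero
  rwa [← WithOne.coe_spow, hm] at this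

theorem spow_mul_eq_of_spow_eq {S : Type*} [CommSemigroup S] {e : S} (he : IsIdempotentElem e)
    {n : ℕ} (hn : ∀ x, spow x n * e = e) {x : S} {m : ℕ} (hxm : spow x m = e) (u : S) :
    spow (u * x) (m * n + m + n) = e := by
  rw [← spow_spow, mul_spow, hxm, mul_spow, he.spow_eq, hn]

theorem Nat.exists_not_and_two_mul_add_one_of_monotone {Q : ℕ → Prop} (hQ : Monotone Q)
    (h0 : ¬Q 0) (hex : ∃ j, Q j) : ∃ q, ¬Q q ∧ Q (2 * q + 1) := by
  classical
  have hpos : Nat.find hex ≠ 0 := fun h => h0 (h ▸ Nat.find_spec hex)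
  exact ⟨Nat.find hex / 2, Nat.find_min hex (by omega), hQ (by omega) (Nat.find_spec hex)⟩

theorem Filter.Tendsto.eq_of_frequently_eq {ι Y : Type*} [TopologicalSpace Y] [T1Space Y]
    {l : Filter ι} {f : ι → Y} {y a : Y} (hf : Tendsto f l (𝓝 y)) (ha : ∃ᶠ i in l, f i = a) :
    y = a :=
  by_contra fun hne => ha (hf.eventually_ne hne)

theorem comap_nhds_neBot_of_mem_closure_range {α Y : Type*} [TopologicalSpace Y] {f : α → Y}
    {y : Y} (hy : y ∈ closure (range f)) : (comap f (𝓝 y)).NeBot :=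
  comap_neBot_iff.2 fun _ ht =>
    let ⟨_, hyt, a, ha⟩ := mem_closure_iff_nhds.1 hy _ ht
    ⟨a, ha ▸ hyt⟩

theorem eventually_eq_of_tendsto_comp {ι α Y : Type*} [TopologicalSpace Y] {f : α → Y}
    (hinj : Injective f) (hdisc : DiscreteTopology (range f)) {l : Filter ι} {g : ι → α}
    {a : α} (hg : Tendsto (fun i => f (g i)) l (𝓝 (f a))) : ∀ᶠ i in l, g i = a := by
  have hg' : Tendsto (fun i => rangeFactorization f (g i)) l (𝓝 (rangeFactorization f a)) :=
    tendsto_subtype_rng.2 hg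
  rw [nhds_discrete] at hg'
  exact (tendsto_pure.1 hg').mono fun i hi => hinj (congrArg Subtype.val hi)

theorem exists_frequently_eq_of_mul_eq {X ι : Type*} [Mul X]
    (hAA : ∀ A : Set X, A.Infinite → ∀ z : X, Set.image2 (· * ·) A A ≠ {z})
    {l : Filter ι} [l.NeBot] {g : ι → X} {t : Set ι} (ht : t ∈ l) {c : X}
    (hc : ∀ a ∈ t, ∀ b ∈ t, g a * g b = c) : ∃ x, ∃ᶠ i in l, g i = x := by
  obtain ⟨a, ha⟩ := Filter.nonempty_of_mem ht
  have hfin : (g '' t).Finite := by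
    refine not_infinite.1 fun hinf => hAA _ hinf c (eq_singleton_iff_unique_mem.2 ⟨?_, ?_⟩)
    · exact ⟨g a, mem_image_of_mem g ha, g a, mem_image_of_mem g ha, hc a ha a ha⟩
    · rintro _ ⟨_, ⟨a, ha, rfl⟩, _, ⟨b, hb, rfl⟩, rfl⟩
      exact hc a ha b hb
  by_contra! hne
  have hall : ∀ᶠ i in l, ∀ x ∈ g '' t, g i ≠ x :=
    (eventually_all_finite hfin).2 fun x _ => hne x
  obtain ⟨i, hi, hit⟩ := (hall.and ht).exists
  exact hi _ (mem_image_of_mem g hit) rfl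

theorem Function.iterate_eq_of_le {α : Type*} {φ : α → α} {e x : α} (hφe : φ e = e) {k j : ℕ}
    (hk : φ^[k] x = e) (hkj : k ≤ j) : φ^[j] x = e := by
  obtain ⟨i, rfl⟩ := Nat.exists_eq_add_of_le hkj
  rw [add_comm, iterate_add_apply, hk, iterate_fixed hφe]

def IsLeftTranslation {S : Type*} [Mul S] (φ : S → S) : Prop :=
  ∀ x y, φ (x * y) = φ x * y

namespace IsLeftTranslation

variable {S : Type*} [CommSemigroup S] {φ : S → S}

theorem iterate_mul (hφ : IsLeftTranslation φ) (k : ℕ) (x y : S) :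
    φ^[k] (x * y) = φ^[k] x * y := by
  induction k with
  | zero => rfl
  | succ k ih => rw [iterate_succ_apply', ih, hφ, iterate_succ_apply']

theorem iterate_mul_iterate (hφ : IsLeftTranslation φ) (a b : ℕ) (x y : S) :
    φ^[a] x * φ^[b] y = φ^[a + b] (x * y) := by
  rw [mul_comm, ← hφ.iterate_mul, mul_comm y, ← hφ.iterate_mul, ← iterate_add_apply, add_comm]

theorem iterate_mul_eq (hφ : IsLeftTranslation φ) {e x y : S} {k : ℕ} (hx : φ^[k] x = e)
    (hy : y * e = e) : φ^[k] (x * y) = e := by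
  rw [hφ.iterate_mul, hx, mul_comm, hy]

/-- Otherwise some power `z` of `x` never reaches `e` while `z * z` does; as the orbit of `z`
contains no cycle, its tail is an infinite set whose products are all `e`. -/
theorem exists_iterate_eq (hφ : IsLeftTranslation φ)
    (hAA : ∀ A : Set S, A.Infinite → ∀ z : S, Set.image2 (· * ·) A A ≠ {z})
    {e : S} (hφe : φ e = e) (hcyc : ∀ c, c * e = e → ∀ P, φ^[P + 1] c = c → c = e)
    {x : S} (hx : x * e = e) {m : ℕ} (hxm : spow x m = e) : ∃ k, φ^[k] x = e := by
  by_contra hnd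
  have hmono : Monotone fun j => ∃ k, φ^[k] (spow x j) = e :=
    monotone_nat_of_le_succ fun j ⟨k, hk⟩ => ⟨k, hφ.iterate_mul_eq hk hx⟩
  obtain ⟨q, hq, k₀, hk₀⟩ := Nat.exists_not_and_two_mul_add_one_of_monotone hmono hnd ⟨m, 0, hxm⟩
  set z := spow x q
  rw [two_mul, spow_add] at hk₀
  have hsq : ∀ a ∈ Ici k₀, ∀ b ∈ Ici k₀, φ^[a] z * φ^[b] z = e := fun a ha b _ => by
    rw [hφ.iterate_mul_iterate]
    exact iterate_eq_of_le hφe hk₀ (by simp only [mem_Ici] at ha; omega)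
  obtain ⟨y, hy⟩ := exists_frequently_eq_of_mul_eq hAA (Ici_mem_atTop k₀) hsq
  obtain ⟨a, -, ha⟩ := frequently_atTop.1 hy 0
  obtain ⟨b, hab, hb⟩ := frequently_atTop.1 hy (a + 1)
  have hcycle : φ^[b - a - 1 + 1] (φ^[a] z) = φ^[a] z := by
    rw [← iterate_add_apply, show b - a - 1 + 1 + a = b by omega, ha, hb]
  have hze : φ^[a] z * e = e := by
    rw [← hφ.iterate_mul, spow_mul_eq_of_mul_eq hx, iterate_fixed hφe]
  exact hq ⟨a, hcyc _ hze _ hcycle⟩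

/-- Otherwise the points `φ^[⌈τ u / 2⌉] u`, where `τ u` is the number of steps `u` needs to reach
`e`, form an infinite set whose products are all `e`. -/
theorem exists_frequently_iterate_eq (hφ : IsLeftTranslation φ)
    (hAA : ∀ A : Set S, A.Infinite → ∀ z : S, Set.image2 (· * ·) A A ≠ {z})
    {e : S} (hφe : φ e = e) (hdies : ∀ u, u * e = e → ∃ k, φ^[k] u = e)
    {L : Filter S} [L.NeBot] (hK : ∀ᶠ u in L, u * e = e) :
    ∃ k, ∃ᶠ u in L, φ^[k + 1] u = e := by
  set τ : S → ℕ := fun u => sInf {k | φ^[k] u = e}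
  have hτ : ∀ u, u * e = e → φ^[τ u] u = e := fun u hu => Nat.sInf_mem (hdies u hu)
  set g : S → S := fun u => φ^[(τ u + 1) / 2] u
  have hprod_of_le : ∀ u v, u * e = e → v * e = e → τ u ≤ τ v → g u * g v = e :=
    fun u v hu hv huv => by
      rw [hφ.iterate_mul_iterate]
      exact iterate_eq_of_le hφe (hφ.iterate_mul_eq (hτ u hu) hv) (by omega)
  have hprod : ∀ u ∈ {u | u * e = e}, ∀ v ∈ {u | u * e = e}, g u * g v = e := fun u hu v hv =>
    (le_total (τ u) (τ v)).elim (hprod_of_le u v hu hv) fun hvu => by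
      rw [mul_comm]; exact hprod_of_le v u hv hu hvu
  obtain ⟨x, hx⟩ := exists_frequently_eq_of_mul_eq hAA hK hprod
  obtain ⟨u₀, rfl, hu₀⟩ := (hx.and_eventually hK).exists
  refine ⟨2 * τ u₀, (hx.and_eventually hK).mono fun u ⟨hgu, hu⟩ => ?_⟩
  have hreach : φ^[τ u₀ + (τ u + 1) / 2] u = e := by
    rw [iterate_add_apply, show φ^[(τ u + 1) / 2] u = g u from rfl, hgu, ← iterate_add_apply,
      add_comm, iterate_add_apply, hτ u₀ hu₀, iterate_fixed hφe]
  exact iterate_eq_of_le hφe (hτ u hu) (by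
    have : τ u ≤ _ := Nat.sInf_le (show _ ∈ {k | φ^[k] u = e} from hreach); omega)

end IsLeftTranslation

theorem map_iterate_succ {X Y : Type*} [Semigroup X] [Semigroup Y] {h : X →ₙ* Y} {w : Y}
    {φ : X → X} (hφ : ∀ x, h (φ x) = w * h x) (k : ℕ) (x : X) :
    h (φ^[k + 1] x) = spow w k * h x := by
  induction k with
  | zero => exact hφ x
  | succ k ih => rw [iterate_succ_apply', hφ, ih, ← mul_assoc, ← spow_succ']

section Embedding

variable {X Y : Type*} [Semigroup Y] [TopologicalSpace Y] [ContinuousMul Y]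

theorem tendsto_spow_comap [Semigroup X] {h : X →ₙ* Y} (w : Y) (k : ℕ) :
    Tendsto (fun u => h (spow u k)) (comap h (𝓝 w)) (𝓝 (spow w k)) := by
  simp only [map_spow]
  exact ((continuous_spow k).tendsto w).comp tendsto_comap

/-- `u * v ^ (j + 1)` is constant for `u, v` close to `w`, hence so is `u ^ (j + 1) * v ^ (j + 1)`,
and the hypothesis on `AA` makes `u ^ (j + 1)` frequently constant. -/
theorem spow_mem_range_of_spow_succ_mem_range [CommSemigroup X] [T1Space Y] {h : X →ₙ* Y}
    (hAA : ∀ A : Set X, A.Infinite → ∀ z : X, Set.image2 (· * ·) A A ≠ {z})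
    (hinj : Injective h) (hdisc : DiscreteTopology (range h)) {w : Y}
    (hw : w ∈ closure (range h)) {j : ℕ} (hj : spow w (j + 1) ∈ range h) :
    spow w j ∈ range h := by
  have := comap_nhds_neBot_of_mem_closure_range hw
  obtain ⟨d, hd⟩ := hj
  have hlim : Tendsto (fun p : X × X => h (p.1 * spow p.2 j)) (comap h (𝓝 w) ×ˢ comap h (𝓝 w))
      (𝓝 (h d)) := by
    simp only [map_mul, hd, spow_succ']
    exact (tendsto_comap.comp tendsto_fst).mul ((tendsto_spow_comap w j).comp tendsto_snd)
  obtain ⟨t, ht, htd⟩ := eventually_prod_self_iff (r := fun u v => u * spow v j = d) |>.1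
    (eventually_eq_of_tendsto_comp hinj hdisc hlim)
  have hconst : ∃ c, ∀ u ∈ t, ∀ v ∈ t, spow u j * spow v j = c := by
    cases j with
    | zero => exact ⟨d, htd⟩
    | succ i =>
      have hsq : ∀ u ∈ t, ∀ v ∈ t, spow u (i + 1) * spow v (i + 1) = spow u i * d :=
        fun u hu v hv => by rw [spow, mul_assoc, htd u hu v hv]
      obtain ⟨u₀, hu₀⟩ := Filter.nonempty_of_mem ht
      refine ⟨spow u₀ i * d, fun u hu v hv => ?_⟩
      rw [mul_comm, hsq v hv u hu, ← hsq v hv u₀ hu₀, mul_comm, hsq u₀ hu₀ v hv]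
  obtain ⟨c, hc⟩ := hconst
  obtain ⟨x, hx⟩ := exists_frequently_eq_of_mul_eq hAA ht hc
  exact ⟨x, ((tendsto_spow_comap w j).eq_of_frequently_eq (hx.mono fun _ => congrArg h)).symm⟩

theorem spow_notMem_range [CommSemigroup X] [T1Space Y] {h : X →ₙ* Y}
    (hAA : ∀ A : Set X, A.Infinite → ∀ z : X, Set.image2 (· * ·) A A ≠ {z})
    (hinj : Injective h) (hdisc : DiscreteTopology (range h)) {w : Y}
    (hw : w ∈ closure (range h)) (hw' : w ∉ range h) (k : ℕ) : spow w k ∉ range h := by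
  induction k with
  | zero => exact hw'
  | succ k ih => exact fun hk => ih (spow_mem_range_of_spow_succ_mem_range hAA hinj hdisc hw hk)

theorem eventually_spow_mul_eq_iterate [Semigroup X] {h : X →ₙ* Y} (hinj : Injective h)
    (hdisc : DiscreteTopology (range h)) {w : Y} {φ : X → X} (hφ : ∀ x, h (φ x) = w * h x)
    (k : ℕ) (x : X) :
    ∀ᶠ u in comap h (𝓝 w), spow u k * x = φ^[k + 1] x := by
  refine eventually_eq_of_tendsto_comp hinj hdisc ?_
  simp only [map_mul, map_iterate_succ hφ]
  exact (tendsto_spow_comap w k).mul_const (h x)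

/-- A cycle `φ^[P + 1] c = c` gives `u ^ (P + 1) * c = c` for `u` near `w`, hence `e * c = c`
since some power of `u ^ (P + 1)` is `e`. -/
theorem eq_of_iterate_eq [CommSemigroup X] {h : X →ₙ* Y} (hinj : Injective h)
    (hdisc : DiscreteTopology (range h)) {w : Y} (hw : w ∈ closure (range h)) {φ : X → X}
    (hφ : ∀ x, h (φ x) = w * h x) {e : X} (hpow : ∀ x, ∃ m, spow x m = e) (c : X)
    (hc : c * e = e) (P : ℕ) (hP : φ^[P + 1] c = c) : c = e := by
  have := comap_nhds_neBot_of_mem_closure_range hw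
  obtain ⟨u, hu⟩ := (eventually_spow_mul_eq_iterate hinj hdisc hφ P c).exists
  obtain ⟨m, hm⟩ := hpow (spow u P)
  have hec : e * c = c := hm ▸ spow_mul_eq_of_mul_eq (hu.trans hP) m
  rw [← hec, mul_comm, hc]

/-- `w * h x` lies in the closure of `h[X]` and one of its powers is `h e`. -/
theorem mul_mem_range [CommSemigroup X] [T1Space Y] {h : X →ₙ* Y}
    (hAA : ∀ A : Set X, A.Infinite → ∀ z : X, Set.image2 (· * ·) A A ≠ {z})
    (hinj : Injective h) (hdisc : DiscreteTopology (range h)) {w : Y}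
    (hw : w ∈ closure (range h)) {e x : X} {N : ℕ} (hN : ∀ u, spow (u * x) N = e) :
    w * h x ∈ range h := by
  have := comap_nhds_neBot_of_mem_closure_range hw
  have hlim : Tendsto (fun u => h (u * x)) (comap h (𝓝 w)) (𝓝 (w * h x)) := by
    simp only [map_mul]
    exact tendsto_comap.mul_const (h x)
  by_contra hq
  refine spow_notMem_range hAA hinj hdisc
    (mem_closure_of_tendsto hlim (.of_forall fun u => mem_range_self _)) hq N ⟨e, ?_⟩
  refine ((((continuous_spow N).tendsto _).comp hlim).eq_of_frequently_eq (a := h e)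
    (.of_forall fun u => ?_)).symm
  simp only [comp_apply, ← map_spow, hN]

/-- For `u` close to `w`, `φ^[k + 1] u ≠ e` because `w ^ (k + 2) ∉ h[X]`; this contradicts
`exists_frequently_iterate_eq`. -/
theorem isClosed_range_of_injective [CommSemigroup X] [T1Space Y]
    (hAA : ∀ A : Set X, A.Infinite → ∀ z : X, Set.image2 (· * ·) A A ≠ {z})
    {e : X} (he : IsIdempotentElem e) (hpow : ∀ x, ∃ m, spow x m = e) {n : ℕ}
    (hn : ∀ x, spow x n * e = e) {h : X →ₙ* Y} (hinj : Injective h)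
    (hdisc : DiscreteTopology (range h)) : IsClosed (range h) := by
  refine isClosed_of_closure_subset fun y hy => by_contra fun hy' => ?_
  have := comap_nhds_neBot_of_mem_closure_range hy
  set w := spow y n
  have hwcl : w ∈ closure (range h) :=
    mem_closure_of_tendsto (tendsto_spow_comap y n) (.of_forall fun u => mem_range_self _)
  have hwe : w * h e = h e := ((tendsto_spow_comap y n).mul_const (h e)).eq_of_frequently_eq
    (.of_forall fun u => by rw [← map_mul, hn])
  choose φ hφ using fun x =>
    mul_mem_range hAA hinj hdisc hwcl (spow_mul_eq_of_spow_eq he hn (hpow x).choose_spec)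
  have hφmul : IsLeftTranslation φ := fun x z => hinj (by rw [map_mul, hφ, hφ, map_mul, mul_assoc])
  have hφe : φ e = e := hinj (by rw [hφ, hwe])
  have := comap_nhds_neBot_of_mem_closure_range hwcl
  have hK : ∀ᶠ u in comap h (𝓝 w), u * e = e :=
    (eventually_spow_mul_eq_iterate hinj hdisc hφ 0 e).mono fun u hu => hu.trans hφe
  have hdies : ∀ u, u * e = e → ∃ k, φ^[k] u = e := fun u hu =>
    hφmul.exists_iterate_eq hAA hφe (eq_of_iterate_eq hinj hdisc hwcl hφ hpow) hu
      (hpow u).choose_spec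
  obtain ⟨k, hk⟩ := hφmul.exists_frequently_iterate_eq hAA hφe hdies hK
  have hlim : Tendsto (fun u => h (φ^[k + 1] u)) (comap h (𝓝 w)) (𝓝 (spow w (k + 1))) := by
    simp only [map_iterate_succ hφ]
    exact tendsto_const_nhds.mul tendsto_comap
  exact spow_notMem_range hAA hinj hdisc hwcl (spow_notMem_range hAA hinj hdisc hy hy' n) (k + 1)
    ⟨e, (hlim.eq_of_frequently_eq (hk.mono fun _ => congrArg h)).symm⟩

end Embedding

theorem statement10 {X : Type*} [CommSemigroup X]
    (hper : IsPeriodicSemigroup X)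
    (e : X) (he : IsIdempotentElem e)
    (huniq : ∀ f : X, IsIdempotentElem f → f = e)
    (hb : BoundedHClass e)
    (hAA : ∀ A : Set X, A.Infinite → ∀ z : X, Set.image2 (· * ·) A A ≠ {z}) :
    IsT1SClosed X := by
  have hpow : ∀ x, ∃ m, spow x m = e := fun x => (hper x).imp fun m hm => huniq _ hm
  obtain ⟨n, hn⟩ := hb
  have hnil : ∀ x, spow x n * e = e := fun x => by
    obtain ⟨m, hm⟩ := hpow (x * e)
    simpa only [mul_spow, he.spow_eq] using hn _ (mul_mem_HClass x hm)
  intro Y _ _ _ _ h hinj hdisc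
  exact isClosed_range_of_injective hAA he hpow hnil hinj hdisc
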